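/- Define $A_p := \sqrt{2}\left(\frac{\Gamma((p+1)/2)}{\sqrt{\pi}}\right)^{1/p}$ for $p > 0$. Then the sequence $\left(A_{\frac{2m}{m+2}}^{-m/2}\right)_{m=25}^{\infty}$ is increasing. -/
import Mathlib


open Real

noncomputable def khinchineA (p : ℝ) : ℝ :=
  Real.sqrt 2 * (Real.Gamma ((p + 1) / 2) / Real.sqrt π) ^ (1 / p)

lemma gamma_three_halves : Real.Gamma (3/2 : ℝ) = Real.sqrt π / 2 := by
  have h : ((3:ℝ)/2) = 1/2 + 1 := by norm_num
  rw [h, Real.Gamma_add_one (by norm_num), Real.Gamma_one_half_eq]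
  ring

lemma khinchine_term_eq (t : ℝ) (ht : 0 < t) :
    khinchineA (2*t/(t+2)) ^ (-(t/2)) =
      Real.exp ((1/2)*Real.log 2 + ((t+2)/4) *
        (Real.log (Real.Gamma (3/2)) - Real.log (Real.Gamma ((3*t+2)/(2*t+4))))) := by
  have ht2 : (0:ℝ) < t + 2 := by linarith
  have ht24 : (0:ℝ) < 2*t + 4 := by linarith
  have hx : ((2*t/(t+2)) + 1)/2 = (3*t+2)/(2*t+4) := by
    field_simp
    ring
  have hxpos : (0:ℝ) < (3*t+2)/(2*t+4) := by positivity
  have hG : 0 < Real.Gamma ((3*t+2)/(2*t+4)) := Real.Gamma_pos_of_pos hxpos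
  have hsp : (0:ℝ) < Real.sqrt π := Real.sqrt_pos.mpr Real.pi_pos
  have hB : 0 < Real.Gamma ((3*t+2)/(2*t+4)) / Real.sqrt π := div_pos hG hsp
  have hinv : 1/(2*t/(t+2)) = (t+2)/(2*t) := by
    field_simp
  rw [khinchineA, hx, hinv]
  have hA : 0 < Real.sqrt 2 *
      (Real.Gamma ((3*t+2)/(2*t+4)) / Real.sqrt π) ^ ((t+2)/(2*t)) :=
    mul_pos (Real.sqrt_pos.mpr (by norm_num)) (Real.rpow_pos_of_pos hB _)
  rw [Real.rpow_def_of_pos hA]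
  congr 1
  rw [Real.log_mul (Real.sqrt_pos.mpr (by norm_num : (0:ℝ) < 2)).ne'
      (Real.rpow_pos_of_pos hB _).ne', Real.log_rpow hB,
      Real.log_div hG.ne' hsp.ne', Real.log_sqrt Real.pi_pos.le,
      Real.log_sqrt (by norm_num : (0:ℝ) ≤ 2),
      gamma_three_halves, Real.log_div hsp.ne' (by norm_num : (2:ℝ) ≠ 0),
      Real.log_sqrt Real.pi_pos.le]
  field_simp
  ring

theorem khinchineA_seq_increasing :
    ∀ m : ℕ, 25 ≤ m →
      khinchineA (2 * (m : ℝ) / ((m : ℝ) + 2)) ^ (-((m : ℝ) / 2)) ≤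
        khinchineA (2 * ((m : ℝ) + 1) / (((m : ℝ) + 1) + 2)) ^ (-(((m : ℝ) + 1) / 2)) := by
  intro m hm
  have ht' : (25:ℝ) ≤ (m:ℝ) := by exact_mod_cast hm
  set t : ℝ := (m : ℝ) with htdef
  have ht : (25:ℝ) ≤ t := ht'
  have ht0 : (0:ℝ) < t := by linarith
  have ht10 : (0:ℝ) < t + 1 := by linarith
  rw [khinchine_term_eq t ht0, khinchine_term_eq (t+1) ht10]
  apply Real.exp_le_exp.mpr
  set a := Real.log (Real.Gamma ((3*t+2)/(2*t+4))) with ha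
  set b := Real.log (Real.Gamma ((3*(t+1)+2)/(2*(t+1)+4))) with hb
  set c := Real.log (Real.Gamma (3/2)) with hc
  have hd1 : (0:ℝ) < 2*t+4 := by linarith
  have hd2 : (0:ℝ) < 2*(t+1)+4 := by linarith
  have hxmem : (3*t+2)/(2*t+4) ∈ Set.Ioi (0:ℝ) := by
    simp only [Set.mem_Ioi]; positivity
  have hzmem : (3/2 : ℝ) ∈ Set.Ioi (0:ℝ) := by norm_num
  have hxy : (3*t+2)/(2*t+4) < (3*(t+1)+2)/(2*(t+1)+4) := by
    rw [div_lt_div_iff₀ hd1 hd2]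
    nlinarith
  have hyz : (3*(t+1)+2)/(2*(t+1)+4) < 3/2 := by
    rw [div_lt_div_iff₀ hd2 (by norm_num : (0:ℝ) < 2)]
    linarith
  have haux := Real.convexOn_log_Gamma.secant_mono_aux1 hxmem hzmem hxy hyz
  simp only [Function.comp_apply] at haux
  rw [← ha, ← hb, ← hc] at haux
  have e1 : (3:ℝ)/2 - (3*t+2)/(2*t+4) = 2/(t+2) := by
    field_simp
    ring
  have e2 : (3:ℝ)/2 - (3*(t+1)+2)/(2*(t+1)+4) = 2/(t+3) := by
    field_simp
    ring
  have e3 : (3*(t+1)+2)/(2*(t+1)+4) - (3*t+2)/(2*t+4) = 2/(t+2) - 2/(t+3) := by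
    field_simp
    ring
  rw [e1, e2, e3] at haux
  have hk : (0:ℝ) ≤ (t+2)*(t+3)/4 := by positivity
  have h2 := mul_le_mul_of_nonneg_left haux hk
  have e4 : (t+2)*(t+3)/4 * (2/(t+2) * b) = (t+3)/2 * b := by
    field_simp
    ring
  have e5 : (t+2)*(t+3)/4 * (2/(t+3) * a + (2/(t+2) - 2/(t+3)) * c)
      = (t+2)/2 * a + (1/2)*c := by
    field_simp
    ring
  rw [e4, e5] at h2
  nlinarith [h2]
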